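/- arXiv:2105.06030 — 5 statements merged into one kernel-verified Lean document; each statement's English description precedes it below -/
import Mathlib

section
/- Let U be a finite set, C ⊆ U (the elements already covered), and let O_1, …, O_p ⊆ U have positive integer costs v_1, …, v_p with v_1 + ⋯ + v_p ≤ M, where M is a positive integer; set W = |O_1 ∪ ⋯ ∪ O_p|. Let α ≥ 0 be real. If a set r ⊆ U with positive integer cost v satisfies |r \ C| / v ≥ α · |O_i \ C| / v_i for every index i, then |r \ C| / v ≥ (α/M) · (W − |C|). -/
/-- Lemma 1 of the paper (per-step guarantee of the approximate greedy algorithm).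
If the chosen set `r` of cost `v` has unit gain (relative to the already covered
set `C`) within factor `α` of the unit gain of every set `O i` of an optimal
solution of total cost at most `M` covering `W` elements, then
`|r \ C| / v ≥ (α / M) * (W - |C|)`. -/
theorem stmt_1 {U : Type*} [Fintype U] [DecidableEq U]
    (C : Finset U) (p : ℕ) (hp : 0 < p) (O : Fin p → Finset U)
    (v : Fin p → ℕ) (hv : ∀ i, 0 < v i) (M : ℕ) (hM : 0 < M)
    (hsum : ∑ i, v i ≤ M)
    (W : ℕ) (hW : W = (Finset.univ.biUnion O).card)
    (α : ℝ) (hα : 0 ≤ α)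
    (r : Finset U) (vc : ℕ) (hvc : 0 < vc)
    (hgreedy : ∀ i : Fin p,
      ((r \ C).card : ℝ) / vc ≥ α * ((O i \ C).card : ℝ) / v i) :
    ((r \ C).card : ℝ) / vc ≥ (α / M) * ((W : ℝ) - C.card) := by
  set g : ℝ := ((r \ C).card : ℝ) / vc with hgdef
  have hg : 0 ≤ g := by positivity
  -- W ≤ |C| + ∑ |O i \ C|
  have hWle : W ≤ C.card + ∑ i, (O i \ C).card := by
    have hsub : Finset.univ.biUnion O ⊆
        C ∪ Finset.univ.biUnion (fun i => O i \ C) := by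
      intro x hx
      simp only [Finset.mem_biUnion, Finset.mem_union, Finset.mem_sdiff] at hx ⊢
      obtain ⟨i, _, hxi⟩ := hx
      by_cases hxC : x ∈ C
      · exact Or.inl hxC
      · exact Or.inr ⟨i, Finset.mem_univ i, hxi, hxC⟩
    calc W ≤ (C ∪ Finset.univ.biUnion (fun i => O i \ C)).card := by
            rw [hW]; exact Finset.card_le_card hsub
      _ ≤ C.card + (Finset.univ.biUnion (fun i => O i \ C)).card :=
            Finset.card_union_le _ _
      _ ≤ C.card + ∑ i, (O i \ C).card :=
            Nat.add_le_add_left (Finset.card_biUnion_le) _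
  have hWle' : (W : ℝ) - C.card ≤ ∑ i, ((O i \ C).card : ℝ) := by
    have := (Nat.cast_le (α := ℝ)).mpr hWle
    push_cast at this
    linarith
  -- each term: α * |O i \ C| ≤ v i * g
  have hterm : ∀ i : Fin p, α * ((O i \ C).card : ℝ) ≤ (v i : ℝ) * g := by
    intro i
    have hvi : (0 : ℝ) < v i := by exact_mod_cast hv i
    have h := hgreedy i
    rw [ge_iff_le, div_le_iff₀ hvi] at h
    linarith
  have hkey : α * ((W : ℝ) - C.card) ≤ (M : ℝ) * g := by
    calc α * ((W : ℝ) - C.card) ≤ α * ∑ i, ((O i \ C).card : ℝ) := by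
          exact mul_le_mul_of_nonneg_left hWle' hα
      _ = ∑ i, α * ((O i \ C).card : ℝ) := by rw [Finset.mul_sum]
      _ ≤ ∑ i, (v i : ℝ) * g := Finset.sum_le_sum fun i _ => hterm i
      _ = ((∑ i, v i : ℕ) : ℝ) * g := by push_cast; rw [Finset.sum_mul]
      _ ≤ (M : ℝ) * g := by
          have : ((∑ i, v i : ℕ) : ℝ) ≤ M := by exact_mod_cast hsum
          exact mul_le_mul_of_nonneg_right this hg
  have hMpos : (0 : ℝ) < M := by exact_mod_cast hM
  rw [ge_iff_le, div_mul_eq_mul_div, div_le_iff₀ hMpos]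
  nlinarith
end

section
/- Let W ≥ 0 be real, let 0 < α ≤ 1, and let v_1, …, v_m be positive integers with v_1 + ⋯ + v_m = M. Suppose a real sequence a_0, a_1, …, a_m satisfies a_0 = 0 and (a_l − a_{l−1}) / v_l ≥ (α/M) · (W − a_{l−1}) for each l ∈ {1, …, m}. Then a_m ≥ (1 − e^{−α}) · W. -/
/-- Theorem 2 of the paper: the approximate greedy algorithm for budgeted
maximum set coverage with per-step guarantee
`(a l - a (l-1)) / v l ≥ (α / M) * (W - a (l-1))` (costs `v l` positive
integers summing to `M`, `a 0 = 0`) achieves `a m ≥ (1 - e^{-α}) * W`. -/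
theorem stmt_5 (W : ℝ) (hW : 0 ≤ W) (α : ℝ) (hα0 : 0 < α) (hα1 : α ≤ 1)
    (m : ℕ) (hm : 0 < m) (v : ℕ → ℕ) (hv : ∀ l ∈ Finset.Icc 1 m, 0 < v l)
    (M : ℕ) (hM : ∑ l ∈ Finset.Icc 1 m, v l = M)
    (a : ℕ → ℝ) (ha0 : a 0 = 0)
    (hrec : ∀ l ∈ Finset.Icc 1 m,
      (a l - a (l - 1)) / (v l : ℝ) ≥ (α / M) * (W - a (l - 1))) :
    a m ≥ (1 - Real.exp (-α)) * W := by
  have hM0 : 0 < M := by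
    rw [← hM]
    exact Finset.sum_pos hv ⟨1, Finset.mem_Icc.mpr ⟨le_refl 1, hm⟩⟩
  have hMr : (0:ℝ) < M := Nat.cast_pos.mpr hM0
  have hfac : ∀ i ∈ Finset.Icc 1 m, (0:ℝ) ≤ 1 - α * v i / M := by
    intro i hi
    have hle : (v i : ℝ) ≤ M := by
      exact_mod_cast hM ▸ Finset.single_le_sum (fun j _ => Nat.zero_le (v j)) hi
    have hvp : (0:ℝ) < v i := Nat.cast_pos.mpr (hv i hi)
    have h1 : α * v i ≤ M := by nlinarith
    rw [sub_nonneg, div_le_one hMr]; exact h1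
  have key : ∀ l, l ≤ m → W - a l ≤ W * ∏ j ∈ Finset.Icc 1 l, (1 - α * v j / M) := by
    intro l
    induction l with
    | zero => intro _; simp [ha0]
    | succ n ih =>
      intro hl
      have hn : n ≤ m := Nat.le_of_succ_le hl
      have hmem : n + 1 ∈ Finset.Icc 1 m :=
        Finset.mem_Icc.mpr ⟨Nat.succ_le_succ (Nat.zero_le n), hl⟩
      have hvp : (0:ℝ) < v (n+1) := Nat.cast_pos.mpr (hv _ hmem)
      have hrec' := hrec (n+1) hmem
      simp only [Nat.add_sub_cancel] at hrec'
      have h2 : α / M * (W - a n) * v (n+1) ≤ a (n+1) - a n :=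
        (le_div_iff₀ hvp).mp hrec'
      have h1 : W - a (n+1) ≤ (1 - α * v (n+1) / M) * (W - a n) := by
        have heq : (1 - α * ↑(v (n+1)) / ↑M) * (W - a n)
            = (W - a n) - α / ↑M * (W - a n) * ↑(v (n+1)) := by ring
        rw [heq]; linarith
      calc W - a (n+1) ≤ (1 - α * v (n+1) / M) * (W - a n) := h1
        _ ≤ (1 - α * v (n+1) / M) * (W * ∏ j ∈ Finset.Icc 1 n, (1 - α * v j / M)) :=
            mul_le_mul_of_nonneg_left (ih hn) (hfac _ hmem)
        _ = W * ∏ j ∈ Finset.Icc 1 (n+1), (1 - α * v j / M) := by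
            rw [Finset.prod_Icc_succ_top (Nat.succ_le_succ (Nat.zero_le n))]; ring
  have hsum : ∑ j ∈ Finset.Icc 1 m, (v j : ℝ) = M := by exact_mod_cast hM
  have hprod : ∏ j ∈ Finset.Icc 1 m, (1 - α * v j / M) ≤ Real.exp (-α) := by
    calc ∏ j ∈ Finset.Icc 1 m, (1 - α * v j / M)
        ≤ ∏ j ∈ Finset.Icc 1 m, Real.exp (-(α * v j / M)) := by
          apply Finset.prod_le_prod hfac
          intro i _
          have := Real.add_one_le_exp (-(α * v i / M))
          linarith
      _ = Real.exp (∑ j ∈ Finset.Icc 1 m, -(α * v j / M)) := (Real.exp_sum _ _).symm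
      _ = Real.exp (-α) := by
          congr 1
          have : ∑ j ∈ Finset.Icc 1 m, -(α * (v j:ℝ) / M)
              = -(α / M) * ∑ j ∈ Finset.Icc 1 m, (v j:ℝ) := by
            rw [Finset.mul_sum]
            exact Finset.sum_congr rfl (fun i _ => by ring)
          rw [this, hsum]
          field_simp
  have hkm := key m le_rfl
  have hfin : W * ∏ j ∈ Finset.Icc 1 m, (1 - α * v j / M) ≤ W * Real.exp (-α) :=
    mul_le_mul_of_nonneg_left hprod hW
  nlinarith [hkm, hfin]
end

section
/- Let W ≥ 0 be real and let v_1, …, v_m be positive integers with v_1 + ⋯ + v_m = M. Suppose a real sequence a_0, a_1, …, a_m satisfies a_0 = 0 and (a_l − a_{l−1}) / v_l ≥ (1/(2M)) · (W − a_{l−1}) for each l ∈ {1, …, m}. Then a_m ≥ (1 − e^{−1/2}) · W, and moreover 1 − e^{−1/2} > 39/100. -/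
/-- Theorem 4 of the paper: with subroutine approximation ratio `α = 1/2`,
the greedy analysis yields `a m ≥ (1 - e^{-1/2}) * W`, and
`1 - e^{-1/2} > 39/100` (≈ 2/5). -/
theorem stmt_6 (W : ℝ) (hW : 0 ≤ W)
    (m : ℕ) (hm : 0 < m) (v : ℕ → ℕ) (hv : ∀ l ∈ Finset.Icc 1 m, 0 < v l)
    (M : ℕ) (hM : ∑ l ∈ Finset.Icc 1 m, v l = M)
    (a : ℕ → ℝ) (ha0 : a 0 = 0)
    (hrec : ∀ l ∈ Finset.Icc 1 m,
      (a l - a (l - 1)) / (v l : ℝ) ≥ (1 / (2 * (M : ℝ))) * (W - a (l - 1))) :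
    a m ≥ (1 - Real.exp (-(1 / 2))) * W ∧
    (39 / 100 : ℝ) < 1 - Real.exp (-(1 / 2)) := by
  have hMpos : 0 < M := by
    rw [← hM]
    exact Finset.sum_pos hv ⟨1, Finset.mem_Icc.2 ⟨le_refl 1, hm⟩⟩
  have hMR : (0:ℝ) < (M:ℝ) := by exact_mod_cast hMpos
  -- main induction
  have key : ∀ l, l ≤ m →
      W - a l ≤ Real.exp (-((∑ i ∈ Finset.Icc 1 l, (v i : ℝ)) / (2 * M))) * W := by
    intro l
    induction l with
    | zero =>
      intro _
      simp [ha0]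
    | succ n ih =>
      intro hnm
      have hn : n ≤ m := Nat.le_of_succ_le hnm
      have ihn := ih hn
      have hmem : n + 1 ∈ Finset.Icc 1 m := Finset.mem_Icc.2 ⟨Nat.succ_le_succ (Nat.zero_le n), hnm⟩
      have hvpos : (0:ℝ) < (v (n+1) : ℝ) := by exact_mod_cast hv _ hmem
      have hrec' := hrec (n+1) hmem
      simp only [Nat.add_sub_cancel] at hrec'
      -- a(n+1) - a n ≥ (v(n+1)/(2M)) * (W - a n)
      have hstep : a (n+1) - a n ≥ ((v (n+1) : ℝ) / (2 * M)) * (W - a n) := by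
        have := (le_div_iff₀ hvpos).1 hrec'
        calc ((v (n+1) : ℝ) / (2 * M)) * (W - a n)
            = 1 / (2 * (M:ℝ)) * (W - a n) * (v (n+1)) := by ring
          _ ≤ a (n+1) - a n := this
      have hb : W - a (n+1) ≤ (1 - (v (n+1) : ℝ) / (2 * M)) * (W - a n) := by nlinarith
      have hvM : (v (n+1) : ℝ) ≤ (M:ℝ) := by
        have : v (n+1) ≤ M := by
          rw [← hM]
          exact Finset.single_le_sum (fun i _ => Nat.zero_le _) hmem
        exact_mod_cast this
      have hfac_nonneg : (0:ℝ) ≤ 1 - (v (n+1) : ℝ) / (2 * M) := by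
        rw [sub_nonneg, div_le_one (by linarith)]
        linarith
      have hfac_le : (1 - (v (n+1) : ℝ) / (2 * M)) ≤ Real.exp (-((v (n+1) : ℝ) / (2 * M))) := by
        have := Real.add_one_le_exp (-((v (n+1) : ℝ) / (2 * M)))
        linarith
      have hsum : (∑ i ∈ Finset.Icc 1 (n+1), (v i : ℝ))
          = (∑ i ∈ Finset.Icc 1 n, (v i : ℝ)) + (v (n+1) : ℝ) :=
        Finset.sum_Icc_succ_top (Nat.succ_le_succ (Nat.zero_le n)) _
      rw [hsum]
      have hE : Real.exp (-(((∑ i ∈ Finset.Icc 1 n, (v i : ℝ)) + (v (n+1):ℝ)) / (2 * M)))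
          = Real.exp (-((v (n+1):ℝ) / (2 * M))) *
            Real.exp (-((∑ i ∈ Finset.Icc 1 n, (v i : ℝ)) / (2 * M))) := by
        rw [← Real.exp_add]; ring_nf
      rw [hE]
      rcases le_or_gt (W - a n) 0 with h0 | h0
      · have : (1 - (v (n+1) : ℝ) / (2 * M)) * (W - a n) ≤ 0 :=
          mul_nonpos_of_nonneg_of_nonpos hfac_nonneg h0
        have hpos : 0 ≤ Real.exp (-((v (n+1):ℝ) / (2 * M))) *
            (Real.exp (-((∑ i ∈ Finset.Icc 1 n, (v i : ℝ)) / (2 * M))) * W) :=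
          mul_nonneg (Real.exp_pos _).le (mul_nonneg (Real.exp_pos _).le hW)
        calc W - a (n+1) ≤ (1 - (v (n+1) : ℝ) / (2 * M)) * (W - a n) := hb
          _ ≤ 0 := this
          _ ≤ _ := by rw [mul_assoc]; exact hpos
      · calc W - a (n+1) ≤ (1 - (v (n+1) : ℝ) / (2 * M)) * (W - a n) := hb
          _ ≤ Real.exp (-((v (n+1):ℝ) / (2 * M))) * (W - a n) :=
            mul_le_mul_of_nonneg_right hfac_le h0.le
          _ ≤ Real.exp (-((v (n+1):ℝ) / (2 * M))) *
              (Real.exp (-((∑ i ∈ Finset.Icc 1 n, (v i : ℝ)) / (2 * M))) * W) :=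
            mul_le_mul_of_nonneg_left ihn (Real.exp_pos _).le
          _ = _ := by ring
  have hkm := key m (le_refl m)
  have hsumM : (∑ i ∈ Finset.Icc 1 m, (v i : ℝ)) = (M:ℝ) := by
    rw [← hM]; push_cast; ring
  rw [hsumM] at hkm
  have hhalf : (M:ℝ) / (2 * M) = 1 / 2 := by field_simp
  rw [hhalf] at hkm
  constructor
  · nlinarith [hkm]
  · have h1 : Real.exp (-(1/2:ℝ)) < 61/100 := by
      rw [Real.exp_neg]
      rw [inv_lt_iff_one_lt_mul₀ (Real.exp_pos _)]
      have hsq : ((100:ℝ)/61)^2 < Real.exp (1/2) ^ 2 := by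
        rw [← Real.exp_nat_mul]
        norm_num
        nlinarith [Real.exp_one_gt_d9]
      have := lt_of_pow_lt_pow_left₀ 2 (Real.exp_pos (1/2:ℝ)).le hsq
      nlinarith [this]
    linarith
end

section
/- Let A, B, S_1, S_2 be finite sets and let γ ∈ [0,1]. Suppose |S_1| ≥ γ · max(|A|, |B|) and |S_2 \ S_1| ≥ γ · max(|A \ S_1|, |B \ S_1|). Then |S_1 ∪ S_2| ≥ (1 − (1 − γ/2)^2) · |A ∪ B|. -/
/-- Lemma 2 of the paper: the two-round greedy algorithm calling a
`γ`-approximation subroutine twice covers at least `(1 - (1 - γ/2)^2)` times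
as many targets as the best pair `A, B`. -/
theorem stmt_7 {U : Type*} [DecidableEq U] (A B S₁ S₂ : Finset U)
    (γ : ℝ) (hγ0 : 0 ≤ γ) (hγ1 : γ ≤ 1)
    (h1 : (S₁.card : ℝ) ≥ γ * max (A.card : ℝ) (B.card : ℝ))
    (h2 : ((S₂ \ S₁).card : ℝ) ≥
      γ * max ((A \ S₁).card : ℝ) ((B \ S₁).card : ℝ)) :
    ((S₁ ∪ S₂).card : ℝ) ≥ (1 - (1 - γ / 2) ^ 2) * ((A ∪ B).card : ℝ) := by
  have key : ((S₂ \ S₁).card : ℝ) + S₁.card = ((S₁ ∪ S₂).card : ℝ) := by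
    rw [Finset.union_comm]
    exact_mod_cast congrArg (Nat.cast : ℕ → ℝ) (Finset.card_sdiff_add_card S₂ S₁)
  have hab : ((A ∪ B).card : ℝ) ≤ A.card + B.card := by
    exact_mod_cast Finset.card_union_le A B
  have hm1a : (A.card : ℝ) ≤ max (A.card : ℝ) (B.card : ℝ) := le_max_left _ _
  have hm1b : (B.card : ℝ) ≤ max (A.card : ℝ) (B.card : ℝ) := le_max_right _ _
  have hm2a : ((A \ S₁).card : ℝ) ≤ max ((A \ S₁).card : ℝ) ((B \ S₁).card : ℝ) :=
    le_max_left _ _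
  have hm2b : ((B \ S₁).card : ℝ) ≤ max ((A \ S₁).card : ℝ) ((B \ S₁).card : ℝ) :=
    le_max_right _ _
  have hsub : ((A ∪ B).card : ℝ) ≤ S₁.card + ((A \ S₁).card + (B \ S₁).card) := by
    have h3 : (A ∪ B).card ≤ ((A ∪ B) \ S₁).card + S₁.card :=
      Finset.card_le_card_sdiff_add_card
    have h4 : ((A ∪ B) \ S₁).card ≤ (A \ S₁).card + (B \ S₁).card := by
      rw [Finset.union_sdiff_distrib]; exact Finset.card_union_le _ _
    have h5 := (Nat.cast_le (α := ℝ)).mpr (h3.trans (Nat.add_le_add_right h4 _))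
    push_cast at h5
    linarith
  have hS1 : (2 : ℝ) * S₁.card ≥ γ * ((A ∪ B).card : ℝ) := by
    nlinarith [max_le_iff.mp (le_refl (max (A.card : ℝ) (B.card : ℝ)))]
  nlinarith [mul_nonneg hγ0 (sub_nonneg.mpr hγ1),
    mul_le_mul_of_nonneg_left h1.le (by linarith : (0:ℝ) ≤ 1 - γ/2)]
end

section
/- Let W ≥ 0 be real, let 0 < c ≤ 1, let v_1, …, v_m be positive integers with v_1 + ⋯ + v_m = M, and let S ⊆ {1,…,m} be a set of indices such that v_l ≥ 4 for all l ∈ S. Suppose a real sequence a_0, a_1, …, a_m satisfies a_0 = 0, a_l − a_{l−1} ≥ (c·v_l/M) · (W − a_{l−1}) for l ∉ S, and a_l − a_{l−1} ≥ (c·(v_l − 1)/M) · (W − a_{l−1}) for l ∈ S. Then a_m ≥ (1 − e^{−3c/4}) · W. -/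
/-- The analytic core of Theorem 3: greedy steps outside `S` give progress
`c * v l / M`, greedy steps in `S` (mutual loops, cost `v l ≥ 4`) give progress
`c * (v l - 1) / M`; since at most `M/4` budget is lost on `S`, the total
exponent is at least `3c/4`, so `a m ≥ (1 - e^{-3c/4}) * W`. -/
theorem stmt_9 (W : ℝ) (hW : 0 ≤ W) (c : ℝ) (hc0 : 0 < c) (hc1 : c ≤ 1)
    (m : ℕ) (hm : 0 < m) (v : ℕ → ℕ) (hv : ∀ l ∈ Finset.Icc 1 m, 0 < v l)
    (M : ℕ) (hM : ∑ l ∈ Finset.Icc 1 m, v l = M)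
    (S : Finset ℕ) (hSsub : S ⊆ Finset.Icc 1 m) (hS4 : ∀ l ∈ S, 4 ≤ v l)
    (a : ℕ → ℝ) (ha0 : a 0 = 0)
    (hrec₁ : ∀ l ∈ Finset.Icc 1 m, l ∉ S →
      a l - a (l - 1) ≥ (c * (v l : ℝ) / M) * (W - a (l - 1)))
    (hrec₂ : ∀ l ∈ S,
      a l - a (l - 1) ≥ (c * ((v l : ℝ) - 1) / M) * (W - a (l - 1))) :
    a m ≥ (1 - Real.exp (-(3 * c / 4))) * W := by
  have hMpos : 0 < M := by
    subst hM
    exact Finset.sum_pos hv ⟨1, by simp [Finset.mem_Icc]; omega⟩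
  have hMR : (0:ℝ) < M := by exact_mod_cast hMpos
  set w : ℕ → ℝ := fun l => if l ∈ S then (v l : ℝ) - 1 else (v l : ℝ) with hw
  have hw0 : ∀ l ∈ Finset.Icc 1 m, 0 ≤ w l := by
    intro l hl
    by_cases h : l ∈ S
    · have := hS4 l h
      simp only [hw, h, if_true]
      have : (4:ℝ) ≤ v l := by exact_mod_cast this
      linarith
    · simp only [hw, h, if_false]
      positivity
  have hvleM : ∀ l ∈ Finset.Icc 1 m, (v l : ℝ) ≤ M := by
    intro l hl
    have : v l ≤ M := by
      rw [← hM]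
      exact Finset.single_le_sum (fun i _ => Nat.zero_le _) hl
    exact_mod_cast this
  have hfac : ∀ l ∈ Finset.Icc 1 m, 0 ≤ 1 - c * w l / M := by
    intro l hl
    have h1 : w l ≤ (M:ℝ) := by
      have := hvleM l hl
      by_cases h : l ∈ S <;> simp only [hw, h, if_true, if_false] <;> linarith
    have h0 := hw0 l hl
    have : c * w l / M ≤ 1 := by
      rw [div_le_one hMR]
      nlinarith
    linarith
  have key : ∀ l ≤ m, W - a l ≤ W * ∏ j ∈ Finset.Icc 1 l, (1 - c * w j / M) := by
    intro l hl
    induction l with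
    | zero => simp [ha0]
    | succ n ih =>
      have hn := ih (Nat.le_of_succ_le hl)
      have hmem : n + 1 ∈ Finset.Icc 1 m := by simp; omega
      have hrec : a (n+1) - a n ≥ (c * w (n+1) / M) * (W - a n) := by
        by_cases h : (n+1) ∈ S
        · have := hrec₂ (n+1) h; simpa [hw, h] using this
        · have := hrec₁ (n+1) hmem h; simpa [hw, h] using this
      have hprod : ∏ j ∈ Finset.Icc 1 (n+1), (1 - c * w j / M)
          = (∏ j ∈ Finset.Icc 1 n, (1 - c * w j / M)) * (1 - c * w (n+1) / M) := by
        rw [Finset.prod_Icc_succ_top (by omega : 1 ≤ n + 1)]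
      have hfacn := hfac (n+1) hmem
      have hprodnn : 0 ≤ ∏ j ∈ Finset.Icc 1 n, (1 - c * w j / M) :=
        Finset.prod_nonneg fun j hj => hfac j (by
          simp only [Finset.mem_Icc] at hj ⊢; omega)
      have step1 : W - a (n+1) ≤ (W - a n) * (1 - c * w (n+1) / M) := by nlinarith
      have step2 : (W - a n) * (1 - c * w (n+1) / M)
          ≤ (W * ∏ j ∈ Finset.Icc 1 n, (1 - c * w j / M)) * (1 - c * w (n+1) / M) :=
        mul_le_mul_of_nonneg_right hn hfacn
      rw [hprod]
      calc W - a (n+1) ≤ _ := step1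
        _ ≤ _ := step2
        _ = _ := by ring
  have hcardS : 4 * (S.card : ℝ) ≤ M := by
    have h1 : 4 * S.card ≤ ∑ l ∈ S, v l := by
      have := Finset.card_nsmul_le_sum S v 4 hS4
      simpa [mul_comm] using this
    have h2 : ∑ l ∈ S, v l ≤ M := by
      rw [← hM]
      exact Finset.sum_le_sum_of_subset hSsub
    have : 4 * S.card ≤ M := le_trans h1 h2
    exact_mod_cast this
  have hsumw : (3:ℝ) / 4 * M ≤ ∑ j ∈ Finset.Icc 1 m, w j := by
    have hsplit : ∀ j ∈ Finset.Icc 1 m,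
        w j = (v j : ℝ) - (if j ∈ S then (1:ℝ) else 0) := by
      intro j _; by_cases h : j ∈ S <;> simp [hw, h]
    have h1 : ∑ j ∈ Finset.Icc 1 m, w j
        = (∑ j ∈ Finset.Icc 1 m, (v j : ℝ))
          - ∑ j ∈ Finset.Icc 1 m, (if j ∈ S then (1:ℝ) else 0) := by
      rw [← Finset.sum_sub_distrib]
      exact Finset.sum_congr rfl hsplit
    have h2 : ∑ j ∈ Finset.Icc 1 m, (if j ∈ S then (1:ℝ) else 0) = S.card := by
      rw [Finset.sum_boole]
      congr 1
      rw [Finset.filter_mem_eq_inter, Finset.inter_eq_right.mpr hSsub]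
    have h3 : (∑ j ∈ Finset.Icc 1 m, (v j : ℝ)) = M := by
      rw [← hM]; push_cast; ring
    rw [h1, h2, h3]
    linarith
  have hexp : ∏ j ∈ Finset.Icc 1 m, (1 - c * w j / M)
      ≤ Real.exp (-(3 * c / 4)) := by
    have hp1 : ∏ j ∈ Finset.Icc 1 m, (1 - c * w j / M)
        ≤ ∏ j ∈ Finset.Icc 1 m, Real.exp (-(c * w j / M)) := by
      apply Finset.prod_le_prod hfac
      intro j hj
      have := Real.add_one_le_exp (-(c * w j / M))
      linarith
    have hp2 : ∏ j ∈ Finset.Icc 1 m, Real.exp (-(c * w j / M))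
        = Real.exp (∑ j ∈ Finset.Icc 1 m, (-(c * w j / M))) :=
      (Real.exp_sum _ _).symm
    have hp3 : ∑ j ∈ Finset.Icc 1 m, (-(c * w j / M))
        = -(c * (∑ j ∈ Finset.Icc 1 m, w j) / M) := by
      rw [Finset.sum_neg_distrib, Finset.mul_sum, Finset.sum_div]
    have hp4 : -(c * (∑ j ∈ Finset.Icc 1 m, w j) / M) ≤ -(3 * c / 4) := by
      rw [neg_le_neg_iff, le_div_iff₀ hMR]
      nlinarith
    calc ∏ j ∈ Finset.Icc 1 m, (1 - c * w j / M) ≤ _ := hp1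
      _ = _ := hp2
      _ ≤ Real.exp (-(3 * c / 4)) := by
          rw [hp3]; exact Real.exp_le_exp.mpr hp4
  have hkey := key m le_rfl
  have hprodnn : 0 ≤ ∏ j ∈ Finset.Icc 1 m, (1 - c * w j / M) :=
    Finset.prod_nonneg fun j hj => hfac j hj
  have : W * ∏ j ∈ Finset.Icc 1 m, (1 - c * w j / M)
      ≤ W * Real.exp (-(3 * c / 4)) := mul_le_mul_of_nonneg_left hexp hW
  nlinarith
end
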